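/- Let k be a field of characteristic p > 0, H a p-soluble finite group, V a kH-module, and a an element of V fixed by some Sylow p-subgroup of H such that the H-orbit of a spans V. If b in V satisfies gcd(|a^H|, |b^H|) = 1, then b is fixed by H. -/

import Mathlib

/-!
Induction on `|H|`. A nontrivial `p`-soluble group has a nontrivial normal subgroup `N` that is a
`p`-group or a `p'`-group, and the problem descends to `H ⧸ N` acting on the fixed space `V^N`.
A normal `p`-subgroup lies in the Sylow subgroup fixing `a`, hence acts trivially on `V`.
If `N` is a `p'`-group, averaging over `N` is an `H`-equivariant projection of `V` onto `V^N`;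
the average of `a` is fixed by `P`, its orbit spans `V^N`, and its orbit size divides `|a^H|`.
Finally `b ∈ V^N`: for `X` the stabiliser of `b` in `N` and `v` in the orbit of `a`, the indices
`|N : X|` and `|N : N_v|` divide the coprime numbers `|b^H|` and `|a^H|`, so `X v = N v`; thus
averaging over `X` and over `N` agree on `V`, and `b = avg_X b = avg_N b` is fixed by `N`.
-/

/-- A finite group is `p`-soluble if it has a subnormal series in which every
quotient is either a `p`-group (every element of the quotient has `p`-power order)
or a `p'`-group (the quotient has order prime to `p`); equivalently, every
composition factor is a `p`-group or a `p'`-group. -/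
def IsPSolvable (p : ℕ) (G : Type*) [Group G] : Prop :=
  ∃ (n : ℕ) (c : Fin (n + 1) → Subgroup G),
    c 0 = ⊥ ∧ c (Fin.last n) = ⊤ ∧
    ∀ i : Fin n, c i.castSucc ≤ c i.succ ∧
      ((c i.castSucc).subgroupOf (c i.succ)).Normal ∧
      ((∀ x ∈ c i.succ, ∃ m : ℕ, x ^ (p ^ m) ∈ c i.castSucc) ∨
        ¬ p ∣ (c i.castSucc).relIndex (c i.succ))

open Subgroup MulAction

namespace Subgroup

variable {G : Type*} [Group G]

theorem relIndex_map_dvd {G' : Type*} [Group G'] (f : G →* G') (H K : Subgroup G) :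
    (H.map f).relIndex (K.map f) ∣ H.relIndex K := by
  rw [← relIndex_comap, comap_map_eq]
  exact relIndex_dvd_of_le_left _ le_sup_left

theorem card_sup_dvd_mul_of_le_normalizer {H K : Subgroup G} (h : H ≤ normalizer K) :
    Nat.card ↥(H ⊔ K) ∣ Nat.card H * Nat.card K := by
  have := normal_subgroupOf_of_le_normalizer h
  have := normal_subgroupOf_sup_of_le_normalizer h
  have hrel : K.relIndex (H ⊔ K) = K.relIndex H :=
    Nat.card_congr (QuotientGroup.quotientInfEquivProdNormalizerQuotient H K h).toEquiv.symm
  rw [← relIndex_bot_left (H ⊔ K), ← relIndex_mul_relIndex ⊥ K _ bot_le le_sup_right,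
    relIndex_bot_left, hrel, mul_comm]
  exact mul_dvd_mul_right (relIndex_dvd_card _ _) _

theorem relIndex_dvd_index_of_normal_right [Finite G] (H K : Subgroup G) [K.Normal] :
    H.relIndex K ∣ H.index := by
  obtain ⟨t, ht⟩ := relIndex_dvd_index_of_normal K H
  have hK : K.relIndex H ≠ 0 := index_ne_zero_of_finite
  have h : H.relIndex K * K.index = K.relIndex H * H.index := by
    rw [← inf_relIndex_right, relIndex_mul_index inf_le_right, ← inf_relIndex_left,
      relIndex_mul_index inf_le_left]
  rw [ht, mul_left_comm] at h
  exact ⟨t, (Nat.eq_of_mul_eq_mul_left (Nat.pos_of_ne_zero hK) h).symm⟩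

theorem card_quotient_lt_card [Finite G] {N : Subgroup G} (hN : N ≠ ⊥) :
    Nat.card (G ⧸ N) < Nat.card G := by
  rw [card_eq_card_quotient_mul_card_subgroup N]
  exact lt_mul_of_one_lt_right Nat.card_pos ((one_lt_card_iff_ne_bot N).mpr hN)

theorem exists_ne_bot_le_normalizer_of_sup_closed [Finite G] (Q : Subgroup G → Prop)
    (hsup : ∀ X Y : Subgroup G, X ≤ normalizer Y → Q X → Q Y → Q (X ⊔ Y))
    (hconj : ∀ (g : G) (X : Subgroup G), Q X → Q (X.map (MulAut.conj g).toMonoidHom))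
    {M L X : Subgroup G} (hL : L ≤ normalizer M) (hXM : X ≤ M) (hMX : M ≤ normalizer X)
    (hX : X ≠ ⊥) (hQX : Q X) :
    ∃ C ≤ M, C ≠ ⊥ ∧ L ≤ normalizer C ∧ Q C := by
  -- A member `C` of `S` of maximal order contains every member of `S`; as conjugation by `L`
  -- permutes `S`, it maps `C` into itself.
  set S : Set (Subgroup G) := {Y | Y ≤ M ∧ M ≤ normalizer Y ∧ Q Y}
  obtain ⟨C, ⟨hCM, hMC, hQC⟩, hCmax⟩ :=
    (Set.toFinite S).exists_maximalFor (fun Y : Subgroup G => Nat.card Y) S ⟨X, hXM, hMX, hQX⟩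
  have hle : ∀ Y ∈ S, Y ≤ C := by
    rintro Y ⟨hYM, hMY, hQY⟩
    have hsupS : C ⊔ Y ∈ S := ⟨sup_le hCM hYM,
      (le_inf hMC hMY).trans (normalizer_inf_normalizer_le_normalizer_sup C Y),
      hsup C Y (hCM.trans hMY) hQC hQY⟩
    exact le_sup_right.trans
      (eq_of_le_of_card_ge le_sup_left (hCmax hsupS (card_le_of_le le_sup_left))).ge
  have hconjC : ∀ g ∈ L, C.map (MulAut.conj g).toMonoidHom ≤ C := by
    intro g hg
    have hM := mem_normalizer_iff_map_conj_eq.mp (hL hg)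
    refine hle _ ⟨hM ▸ map_mono hCM, ?_, hconj g C hQC⟩
    rw [← map_equiv_normalizer_eq]
    exact hM ▸ map_mono hMC
  refine ⟨C, hCM, ne_bot_of_le_ne_bot hX (hle X ⟨hXM, hMX, hQX⟩), fun g hg => ?_, hQC⟩
  exact mem_normalizer_iff_map_conj_eq.mpr (eq_of_le_of_card_ge (hconjC g hg)
    (card_map_of_injective (MulAut.conj g).injective).ge)

end Subgroup

namespace IsPSolvable

variable {G : Type*} [Group G] {p : ℕ}

theorem of_surjective {G' : Type*} [Group G'] {f : G →* G'} (hf : Function.Surjective f)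
    (h : IsPSolvable p G) : IsPSolvable p G' := by
  obtain ⟨n, c, h0, hlast, hstep⟩ := h
  refine ⟨n, fun i => (c i).map f, by simp [h0], by simp [hlast, map_top_of_surjective f hf],
    fun i => ?_⟩
  obtain ⟨hle, hnorm, hfactor⟩ := hstep i
  have hle' : (c i.castSucc).map f ≤ (c i.succ).map f := map_mono hle
  refine ⟨hle', (normal_subgroupOf_iff_le_normalizer hle').mpr
    ((map_mono ((normal_subgroupOf_iff_le_normalizer hle).mp hnorm)).trans
      (le_normalizer_map f)), ?_⟩
  refine hfactor.imp (fun hpow x hx => ?_) (fun hndvd hdvd => hndvd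
    (hdvd.trans (relIndex_map_dvd f _ _)))
  obtain ⟨y, hy, rfl⟩ := hx
  obtain ⟨m, hm⟩ := hpow y hy
  exact ⟨m, by simpa using mem_map_of_mem f hm⟩

theorem exists_normal_isPGroup_or_not_dvd [Finite G] [Nontrivial G] (hp : p.Prime)
    (h : IsPSolvable p G) :
    ∃ N : Subgroup G, N.Normal ∧ N ≠ ⊥ ∧ (IsPGroup p N ∨ ¬ p ∣ Nat.card N) := by
  obtain ⟨n, c, h0, hlast, hstep⟩ := h
  have key : ∀ i, c i ≠ ⊥ → ∃ X ≤ c i, X ≠ ⊥ ∧ c i ≤ normalizer X ∧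
      (IsPGroup p X ∨ ¬ p ∣ Nat.card X) := by
    refine Fin.induction (fun h => absurd h0 h) fun i ih hne => ?_
    obtain ⟨hle, hnorm, hfactor⟩ := hstep i
    by_cases hbot : c i.castSucc = ⊥
    · refine ⟨c i.succ, le_rfl, hne, le_normalizer, ?_⟩
      rw [hbot, relIndex_bot_left] at hfactor
      refine hfactor.imp_left fun hpow x => ?_
      obtain ⟨m, hm⟩ := hpow x x.2
      exact ⟨m, Subtype.ext (by simpa using hm)⟩
    have hL := (normal_subgroupOf_iff_le_normalizer hle).mp hnorm
    obtain ⟨X, hXM, hX, hMX, hQX | hQX⟩ := ih hbot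
    · obtain ⟨C, hCM, hC, hLC, hQC⟩ :=
        exists_ne_bot_le_normalizer_of_sup_closed (IsPGroup p ·)
        (fun _ _ h hX hY => hX.to_sup_of_normal_right' hY h) (fun _ _ hX => hX.map _)
        hL hXM hMX hX hQX
      exact ⟨C, hCM.trans hle, hC, hLC, .inl hQC⟩
    · obtain ⟨C, hCM, hC, hLC, hQC⟩ :=
        exists_ne_bot_le_normalizer_of_sup_closed (fun Y => ¬ p ∣ Nat.card Y)
        (fun _ _ h hX hY hdvd => (hp.dvd_mul.mp
          (hdvd.trans (card_sup_dvd_mul_of_le_normalizer h))).elim hX hY)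
        (fun g _ hX => by rwa [card_map_of_injective (MulAut.conj g).injective])
        hL hXM hMX hX hQX
      exact ⟨C, hCM.trans hle, hC, hLC, .inr hQC⟩
  obtain ⟨N, -, hN, hnorm, hQ⟩ := key (Fin.last n) (hlast ▸ top_ne_bot)
  exact ⟨N, normalizer_eq_top_iff.mp (top_le_iff.mp (hlast ▸ hnorm)), hN, hQ⟩

end IsPSolvable

namespace MulAction

variable {G α : Type*} [Group G] [MulAction G α]

theorem orbit_subgroup_eq_of_coprime_index [Finite G] {X : Subgroup G} {x : α}
    (h : Nat.Coprime X.index (stabilizer G x).index) : orbit X x = orbit G x := by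
  refine Set.eq_of_subset_of_ncard_le (orbit_subgroup_subset X x) ?_
    (Finite.finite_mulAction_orbit x)
  rw [← index_stabilizer, ← index_stabilizer]
  have hdvd : (stabilizer G x).index ∣ (stabilizer G x).relIndex X * X.index := by
    rw [← inf_relIndex_left, relIndex_mul_index inf_le_left]
    exact index_dvd_of_le inf_le_right
  exact Nat.le_of_dvd (Nat.pos_of_ne_zero index_ne_zero_of_finite)
    (h.symm.dvd_of_dvd_mul_right hdvd)

theorem stabilizer_subgroup_eq_subgroupOf (N : Subgroup G) (x : α) :
    stabilizer N x = (stabilizer G x).subgroupOf N := by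
  ext; rfl

theorem card_orbit_subgroup_dvd_of_normal [Finite G] (N : Subgroup G) [N.Normal] (x : α) :
    Nat.card (orbit N x) ∣ Nat.card (orbit G x) := by
  rw [Nat.card_coe_set_eq, Nat.card_coe_set_eq, ← index_stabilizer, ← index_stabilizer,
    stabilizer_subgroup_eq_subgroupOf]
  exact relIndex_dvd_index_of_normal_right _ N

theorem orbitProdStabilizerEquivGroup_smul (x : α) (y : orbit G x) (s : stabilizer G x) :
    orbitProdStabilizerEquivGroup G x (y, s) • x = y := by
  set g := orbitProdStabilizerEquivGroup G x (y, s)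
  have h1 : (groupEquivQuotientProdSubgroup g).1 = (g : G ⧸ stabilizer G x) := rfl
  have h2 : groupEquivQuotientProdSubgroup g = (orbitEquivQuotientStabilizer G x y, s) := by
    simp [g, orbitProdStabilizerEquivGroup]
  rw [h2] at h1
  rw [← orbitEquivQuotientStabilizer_symm_apply, ← h1]
  simp

theorem sum_smul_eq_card_stabilizer_nsmul_finsum_orbit [Fintype G] {M : Type*}
    [AddCommMonoid M] (f : α → M) (x : α) :
    ∑ g : G, f (g • x) = Nat.card (stabilizer G x) • ∑ᶠ y ∈ orbit G x, f y := by
  classical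
  let := (Finite.finite_mulAction_orbit (M := G) x).fintype
  rw [← (orbitProdStabilizerEquivGroup G x).sum_comp, Fintype.sum_prod_type]
  simp only [orbitProdStabilizerEquivGroup_smul, Finset.sum_const, Finset.card_univ,
    ← Finset.smul_sum, Nat.card_eq_fintype_card, ← finsum_subtype_eq_finsum_cond,
    finsum_eq_sum_of_fintype]

end MulAction

namespace Representation

variable {k V G : Type*} [Field k] [AddCommGroup V] [Module k V] [Group G] [Fintype G]
  [DistribMulAction G V] [SMulCommClass G k V] [Invertible (Fintype.card G : k)]

theorem averageMap_ofDistribMulAction_apply (v : V) :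
    (ofDistribMulAction k G V).averageMap v = ⅟(Fintype.card G : k) • ∑ g : G, g • v := by
  simp [averageMap, GroupAlgebra.average, map_sum]

theorem averageMap_ofDistribMulAction_eq_finsum_orbit (v : V) :
    (ofDistribMulAction k G V).averageMap v =
      (Nat.card (orbit G v) : k)⁻¹ • ∑ᶠ y ∈ orbit G v, y := by
  have hcard : Fintype.card G = Nat.card (orbit G v) * Nat.card (stabilizer G v) := by
    rw [Nat.card_coe_set_eq, ← index_stabilizer, mul_comm, card_mul_index,
      Nat.card_eq_fintype_card]
  have hstab : (Nat.card (stabilizer G v) : k) ≠ 0 := fun h =>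
    Invertible.ne_zero (Fintype.card G : k) (by rw [hcard, Nat.cast_mul, h, mul_zero])
  have hsum : ∑ g : G, g • v = Nat.card (stabilizer G v) • ∑ᶠ y ∈ orbit G v, y :=
    sum_smul_eq_card_stabilizer_nsmul_finsum_orbit id v
  rw [averageMap_ofDistribMulAction_apply, hsum, invOf_eq_inv, hcard,
    ← Nat.cast_smul_eq_nsmul k, smul_smul, Nat.cast_mul, mul_inv, mul_assoc,
    inv_mul_cancel₀ hstab, mul_one]

theorem smul_averageMap_ofDistribMulAction {H : Type*} [Group H] [DistribMulAction H V]
    [SMulCommClass H k V] {N : Subgroup H} [N.Normal] [Fintype N]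
    [Invertible (Fintype.card N : k)] (h : H) (v : V) :
    h • (ofDistribMulAction k N V).averageMap v =
      (ofDistribMulAction k N V).averageMap (h • v) := by
  rw [averageMap_ofDistribMulAction_apply, averageMap_ofDistribMulAction_apply, smul_comm,
    Finset.smul_sum]
  congr 1
  refine Fintype.sum_equiv (MulAut.conjNormal h).toEquiv _ _ fun g => ?_
  rw [Subgroup.smul_def, Subgroup.smul_def, MulEquiv.toEquiv_eq_coe, MulEquiv.coe_toEquiv,
    MulAut.conjNormal_apply, mul_smul, mul_smul, inv_smul_smul]

end Representation

section FixedSubmodule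

open Representation Submodule

variable (k V : Type*) {G : Type*} [CommRing k] [AddCommGroup V] [Module k V] [Group G]
  [DistribMulAction G V] [SMulCommClass G k V]

noncomputable def fixedSubmodule (N : Subgroup G) : Submodule k V :=
  (ofDistribMulAction k N V).invariants

variable {k V} {N : Subgroup G}

theorem mem_fixedSubmodule {v : V} : v ∈ fixedSubmodule k V N ↔ ∀ g ∈ N, g • v = v :=
  ⟨fun h g hg => h ⟨g, hg⟩, fun h g => h g g.2⟩

variable [N.Normal]

instance : DistribMulAction (G ⧸ N) (fixedSubmodule k V N) where
  toMulAction := inferInstanceAs (MulAction (G ⧸ N) (fixedPoints N V))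
  smul_zero q := QuotientGroup.induction_on q fun g => Subtype.ext (smul_zero g)
  smul_add q v w := QuotientGroup.induction_on q fun g => Subtype.ext (smul_add g (v : V) w)

instance : SMulCommClass (G ⧸ N) k (fixedSubmodule k V N) :=
  ⟨fun q c w => QuotientGroup.induction_on q fun g => Subtype.ext (smul_comm g c (w : V))⟩

theorem image_coe_orbit_quotient_fixedSubmodule (w : fixedSubmodule k V N) :
    Subtype.val '' orbit (G ⧸ N) w = orbit G (w : V) := by
  ext v
  constructor
  · rintro ⟨_, ⟨q, rfl⟩, rfl⟩
    induction q using QuotientGroup.induction_on with | H g => exact ⟨g, rfl⟩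
  · rintro ⟨g, rfl⟩
    exact ⟨(g : G ⧸ N) • w, ⟨g, rfl⟩, rfl⟩

theorem card_orbit_quotient_fixedSubmodule (w : fixedSubmodule k V N) :
    Nat.card (orbit (G ⧸ N) w) = Nat.card (orbit G (w : V)) := by
  rw [← image_coe_orbit_quotient_fixedSubmodule,
    Nat.card_image_of_injective Subtype.val_injective]

theorem span_orbit_quotient_fixedSubmodule_eq_top {w : fixedSubmodule k V N}
    (h : fixedSubmodule k V N ≤ span k (orbit G (w : V))) :
    span k (orbit (G ⧸ N) w) = ⊤ := by
  apply map_injective_of_injective (fixedSubmodule k V N).injective_subtype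
  rw [map_span, map_subtype_top]
  refine le_antisymm (span_le.mpr ?_) ?_
  · rintro _ ⟨w', -, rfl⟩
    exact w'.2
  · exact h.trans_eq (congrArg _ (image_coe_orbit_quotient_fixedSubmodule w).symm)

end FixedSubmodule

section Reduction

open Representation Submodule

variable {k V G : Type*} [Field k] [AddCommGroup V] [Module k V] [Group G]
  [DistribMulAction G V] [SMulCommClass G k V] {p : ℕ} {N : Subgroup G} [N.Normal]

theorem fixedSubmodule_eq_top_of_isPGroup (hN : IsPGroup p N) {P : Sylow p G} {a : V}
    (hPa : ∀ g ∈ P, g • a = a) (hspan : span k (orbit G a) = ⊤) :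
    fixedSubmodule k V N = ⊤ := by
  rw [eq_top_iff, ← hspan, span_le]
  rintro _ ⟨h, rfl⟩
  refine mem_fixedSubmodule.mpr fun g hg => ?_
  calc g • h • a = h • (h⁻¹ * g * h) • a := by simp [mul_smul]
    _ = h • a := by rw [hPa _ (hN.le_sylow_of_normal P (Normal.conj_mem' ‹_› g hg h))]

theorem mem_fixedSubmodule_of_coprime_card_orbit [Finite G] (hN : (Nat.card N : k) ≠ 0)
    {a b : V} (hspan : span k (orbit G a) = ⊤)
    (hcop : Nat.Coprime (Nat.card (orbit G a)) (Nat.card (orbit G b))) :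
    b ∈ fixedSubmodule k V N := by
  classical
  have := Fintype.ofFinite G
  let X := stabilizer N b
  have : Invertible (Fintype.card N : k) :=
    invertibleOfNonzero (by rwa [← Nat.card_eq_fintype_card])
  have : Invertible (Fintype.card X : k) := invertibleOfNonzero fun h => hN <| by
    obtain ⟨t, ht⟩ := card_subgroup_dvd_card X
    rw [ht, Nat.cast_mul, Nat.card_eq_fintype_card, h, zero_mul]
  have hagree :
      (ofDistribMulAction k X V).averageMap = (ofDistribMulAction k N V).averageMap := by
    refine LinearMap.ext_on hspan ?_
    rintro _ ⟨g, rfl⟩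
    have horbit : orbit X (g • a) = orbit N (g • a) := by
      refine orbit_subgroup_eq_of_coprime_index ?_
      rw [index_stabilizer, index_stabilizer, ← Nat.card_coe_set_eq, ← Nat.card_coe_set_eq]
      have hb := card_orbit_subgroup_dvd_of_normal N b
      have hv := card_orbit_subgroup_dvd_of_normal N (g • a)
      rw [orbit_smul] at hv
      exact (hcop.symm.coprime_dvd_left hb).coprime_dvd_right hv
    rw [averageMap_ofDistribMulAction_eq_finsum_orbit,
      averageMap_ofDistribMulAction_eq_finsum_orbit, horbit]
  rw [← averageMap_id (ofDistribMulAction k X V) b fun x => x.2, hagree]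
  exact averageMap_invariant _ b

theorem exists_mem_fixedSubmodule_of_card_ne_zero [Finite G] (hN : (Nat.card N : k) ≠ 0)
    {P : Subgroup G} {a : V} (hPa : ∀ g ∈ P, g • a = a) (hspan : span k (orbit G a) = ⊤) :
    ∃ a' ∈ fixedSubmodule k V N, (∀ g ∈ P, g • a' = a') ∧
      fixedSubmodule k V N ≤ span k (orbit G a') ∧
      Nat.card (orbit G a') ∣ Nat.card (orbit G a) := by
  classical
  have := Fintype.ofFinite G
  have : Invertible (Fintype.card N : k) :=
    invertibleOfNonzero (by rwa [← Nat.card_eq_fintype_card])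
  set e := (ofDistribMulAction k N V).averageMap
  have he : ∀ (g : G) v, g • e v = e (g • v) := smul_averageMap_ofDistribMulAction
  refine ⟨e a, averageMap_invariant _ a, fun g hg => by rw [he, hPa g hg], fun w hw => ?_, ?_⟩
  · have horbit : e '' orbit G a = orbit G (e a) := by
      simp only [orbit, ← Set.range_comp, Function.comp_def, he]
    rw [← horbit, ← map_span, hspan, ← averageMap_id _ w hw]
    exact mem_map_of_mem mem_top
  · rw [Nat.card_coe_set_eq, Nat.card_coe_set_eq, ← index_stabilizer, ← index_stabilizer]
    exact index_dvd_of_le fun g hg => by rw [mem_stabilizer_iff, he, mem_stabilizer_iff.mp hg]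

theorem IsPSolvable.exists_fixedSubmodule_reduction [Finite G] [Nontrivial G] (hp : p.Prime)
    (hchar : CharP k p) (hps : IsPSolvable p G) {P : Sylow p G} {a b : V}
    (hPa : ∀ g ∈ P, g • a = a) (hspan : span k (orbit G a) = ⊤)
    (hcop : Nat.Coprime (Nat.card (orbit G a)) (Nat.card (orbit G b))) :
    ∃ N : Subgroup G, N.Normal ∧ N ≠ ⊥ ∧ b ∈ fixedSubmodule k V N ∧
      ∃ a' ∈ fixedSubmodule k V N, (∀ g ∈ P, g • a' = a') ∧
        fixedSubmodule k V N ≤ span k (orbit G a') ∧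
        Nat.card (orbit G a') ∣ Nat.card (orbit G a) := by
  obtain ⟨N, hN, hNbot, hpN | hpN⟩ := hps.exists_normal_isPGroup_or_not_dvd hp
  · have hW := fixedSubmodule_eq_top_of_isPGroup hpN hPa hspan
    exact ⟨N, hN, hNbot, hW ▸ mem_top, a, hW ▸ mem_top, hPa,
      hspan ▸ le_top, dvd_rfl⟩
  · have hN' : (Nat.card N : k) ≠ 0 := by rwa [Ne, CharP.cast_eq_zero_iff k p]
    exact ⟨N, hN, hNbot, mem_fixedSubmodule_of_coprime_card_orbit hN' hspan hcop,
      exists_mem_fixedSubmodule_of_card_ne_zero hN' hPa hspan⟩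

end Reduction

/-- Over a field of characteristic `p > 0`, let `H` be a `p`-soluble
finite group, and `a ∈ V` fixed by some Sylow `p`-subgroup of `H` with `H`-orbit
spanning `V`.  If `b ∈ V` has orbit size coprime to that of `a`, then `b` is fixed
by all of `H`. -/
theorem stmt4 {k V H : Type*} [Field k] [AddCommGroup V] [Module k V]
    [Group H] [Finite H] [DistribMulAction H V] [SMulCommClass H k V]
    (p : ℕ) (hp : p.Prime) (hchar : CharP k p)
    (hps : IsPSolvable p H)
    (a : V) (P : Sylow p H) (hPa : ∀ h ∈ (P : Subgroup H), h • a = a)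
    (hspan : Submodule.span k (MulAction.orbit H a) = ⊤)
    (b : V)
    (hcop : Nat.Coprime (Nat.card (MulAction.orbit H a)) (Nat.card (MulAction.orbit H b))) :
    ∀ h : H, h • b = b := by
  obtain ⟨n, hn⟩ : ∃ n, Nat.card H = n := ⟨_, rfl⟩
  induction n using Nat.strong_induction_on generalizing H V with
  | _ n ih =>
  rcases subsingleton_or_nontrivial H with hH | hH
  · exact fun h => by rw [Subsingleton.elim h 1, one_smul]
  obtain ⟨N, hN, hNbot, hb, a', ha', hPa', hspan', hdvd⟩ :=
    hps.exists_fixedSubmodule_reduction hp hchar hPa hspan hcop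
  have := Fact.mk hp
  have hmk := QuotientGroup.mk'_surjective N
  have hPW : ∀ q ∈ (P.mapSurjective hmk : Subgroup (H ⧸ N)),
      q • (⟨a', ha'⟩ : fixedSubmodule k V N) = ⟨a', ha'⟩ := by
    rw [Sylow.coe_mapSurjective]
    rintro _ ⟨g, hg, rfl⟩
    exact Subtype.ext (hPa' g hg)
  have hfix := ih _ (hn ▸ card_quotient_lt_card hNbot) (V := fixedSubmodule k V N) (H := H ⧸ N)
    (hps.of_surjective hmk) ⟨a', ha'⟩ _ hPW (span_orbit_quotient_fixedSubmodule_eq_top hspan')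
    ⟨b, hb⟩ (by rw [card_orbit_quotient_fixedSubmodule, card_orbit_quotient_fixedSubmodule]
                exact hcop.coprime_dvd_left hdvd) rfl
  exact fun h => congrArg Subtype.val (hfix h)
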